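/- For every finite simple graph G with maximum degree Δ ≥ 1, i(G) ≤ (Δ − 2√Δ + 2)·γ(G). -/
import Mathlib


open SimpleGraph

variable {V : Type*}

/-- The closed neighborhood `N[S]` of a set of vertices. -/
def closedNbhd (G : SimpleGraph V) (S : Set V) : Set V :=
  {v | v ∈ S ∨ ∃ u ∈ S, G.Adj u v}

/-- The open neighborhood `N(S)` of a set of vertices. -/
def openNbhd (G : SimpleGraph V) (S : Set V) : Set V :=
  {v | ∃ u ∈ S, G.Adj u v}

/-- A set is independent if no two of its vertices are adjacent. -/
def IsIndep (G : SimpleGraph V) (S : Set V) : Prop :=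
  S.Pairwise fun u w => ¬ G.Adj u w

/-- `S` is `K_k`-isolating: `G - N[S]` contains no clique of size `k`. -/
def IsIsolating (G : SimpleGraph V) (k : ℕ) (S : Set V) : Prop :=
  ∀ T : Finset V, (↑T : Set V) ∩ closedNbhd G S = ∅ → G.IsClique ↑T → T.card ≠ k

/-- The `K_k`-isolation number `ι_k(G)`. -/
noncomputable def iota [Fintype V] (G : SimpleGraph V) (k : ℕ) : ℕ :=
  sInf {n | ∃ S : Finset V, S.card = n ∧ IsIsolating G k ↑S}

/-- The independent `K_k`-isolation number `ι'_k(G)`. -/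
noncomputable def iota' [Fintype V] (G : SimpleGraph V) (k : ℕ) : ℕ :=
  sInf {n | ∃ S : Finset V, S.card = n ∧ IsIsolating G k ↑S ∧ IsIndep G ↑S}

/-- A dominating set: every vertex lies in `N[S]`. -/
def IsDominating (G : SimpleGraph V) (S : Set V) : Prop :=
  ∀ v, v ∈ closedNbhd G S

/-- The domination number `γ(G)`. -/
noncomputable def gammaNum [Fintype V] (G : SimpleGraph V) : ℕ :=
  sInf {n | ∃ S : Finset V, S.card = n ∧ IsDominating G ↑S}

/-- The independent domination number `i(G)`. -/
noncomputable def iNum [Fintype V] (G : SimpleGraph V) : ℕ :=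
  sInf {n | ∃ S : Finset V, S.card = n ∧ IsDominating G ↑S ∧ IsIndep G ↑S}

/-- `G` is `K_{1,r}`-free: no induced subgraph isomorphic to the star `K_{1,r}`. -/
def K1rFree (G : SimpleGraph V) (r : ℕ) : Prop :=
  IsEmpty (completeBipartiteGraph (Fin 1) (Fin r) ↪g G)

/-- Degree of `v` inside the vertex subset `T`. -/
def degIn [DecidableEq V] (G : SimpleGraph V) [DecidableRel G.Adj] (T : Finset V) (v : V) : ℕ :=
  (T.filter (G.Adj v)).card

section AuxLemmas

set_option linter.unusedSectionVars false

variable [Fintype V] [DecidableEq V] (G : SimpleGraph V) [DecidableRel G.Adj]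

private lemma closedNbhd_mono' {S T : Set V} (h : S ⊆ T) :
    closedNbhd G S ⊆ closedNbhd G T := by
  intro v hv
  rcases hv with h1 | ⟨u, hu, ha⟩
  · exact Or.inl (h h1)
  · exact Or.inr ⟨u, h hu, ha⟩

/-- Every finite set has a maximal independent subset dominating it. -/
private lemma exists_mis (X : Finset V) :
    ∃ M : Finset V, M ⊆ X ∧ IsIndep G ↑M ∧ ∀ x ∈ X, x ∈ closedNbhd G (↑M : Set V) := by
  classical
  suffices H : ∀ n (X : Finset V), X.card ≤ n →
      ∃ M : Finset V, M ⊆ X ∧ IsIndep G ↑M ∧ ∀ x ∈ X, x ∈ closedNbhd G (↑M : Set V) from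
    H X.card X le_rfl
  intro n
  induction n with
  | zero =>
    intro X hX
    have hXe : X = ∅ := Finset.card_eq_zero.mp (Nat.le_zero.mp hX)
    subst hXe
    exact ⟨∅, Finset.Subset.refl _, by simp [IsIndep], by simp⟩
  | succ n ih =>
    intro X hX
    rcases X.eq_empty_or_nonempty with rfl | ⟨x, hx⟩
    · exact ⟨∅, Finset.Subset.refl _, by simp [IsIndep], by simp⟩
    · set X' := (X.erase x).filter (fun y => ¬ G.Adj x y) with hX'
      have hsub : X' ⊆ X := (Finset.filter_subset _ _).trans (Finset.erase_subset _ _)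
      have hxX' : x ∉ X' := fun h => (Finset.mem_erase.mp ((Finset.filter_subset _ _) h)).1 rfl
      have hcard : X'.card ≤ n := by
        have h1 : X'.card < X.card := Finset.card_lt_card ⟨hsub, fun hc => hxX' (hc hx)⟩
        omega
      obtain ⟨M', hM'sub, hM'ind, hM'dom⟩ := ih X' hcard
      have hcross : ∀ b ∈ (↑M' : Set V), ¬ G.Adj x b := by
        intro b hb hadj
        have hbm : b ∈ M' := hb
        have h2 := hM'sub hbm
        rw [hX', Finset.mem_filter] at h2
        exact h2.2 hadj
      refine ⟨insert x M', Finset.insert_subset_iff.mpr ⟨hx, hM'sub.trans hsub⟩, ?_, ?_⟩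
      · rw [IsIndep, Finset.coe_insert]
        intro a ha b hb hne
        rcases Set.mem_insert_iff.mp ha with rfl | ha' <;>
          rcases Set.mem_insert_iff.mp hb with rfl | hb'
        · exact absurd rfl hne
        · exact hcross b hb'
        · exact fun hadj => hcross a ha' hadj.symm
        · exact hM'ind ha' hb' hne
      · intro y hy
        by_cases hyx : y = x
        · exact Or.inl (by simp [hyx])
        · by_cases hadj : G.Adj x y
          · exact Or.inr ⟨x, by simp, hadj⟩
          · have hyX' : y ∈ X' := by
              rw [hX', Finset.mem_filter, Finset.mem_erase]
              exact ⟨⟨hyx, hy⟩, hadj⟩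
            exact closedNbhd_mono' G
              (by rw [Finset.coe_insert]; exact Set.subset_insert _ _) (hM'dom y hyX')

/-- Key construction: a greedy independent subset `J` of `A` dominating `A`, built by
repeatedly picking the vertex of `A` with fewest neighbours inside the current `A`,
together with the fiber accounting inequality. -/
private lemma exists_good (A : Finset V) :
    ∃ J : Finset V, J ⊆ A ∧ IsIndep G ↑J ∧ (∀ a ∈ A, a ∈ closedNbhd G (↑J : Set V)) ∧
      ∀ X : Finset V, (∀ x ∈ X, x ∉ closedNbhd G (↑J : Set V)) →
        (J.card : ℝ) + ∑ d ∈ A \ J, ((X.filter (G.Adj d)).card : ℝ) ≤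
          ((G.maxDegree : ℝ) - 2 * Real.sqrt (G.maxDegree : ℝ) + 2) * (A.card : ℝ) := by
  classical
  suffices H : ∀ n (A : Finset V), A.card ≤ n →
      ∃ J : Finset V, J ⊆ A ∧ IsIndep G ↑J ∧ (∀ a ∈ A, a ∈ closedNbhd G (↑J : Set V)) ∧
      ∀ X : Finset V, (∀ x ∈ X, x ∉ closedNbhd G (↑J : Set V)) →
        (J.card : ℝ) + ∑ d ∈ A \ J, ((X.filter (G.Adj d)).card : ℝ) ≤
          ((G.maxDegree : ℝ) - 2 * Real.sqrt (G.maxDegree : ℝ) + 2) * (A.card : ℝ) from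
    H A.card A le_rfl
  intro n
  induction n with
  | zero =>
    intro A hA
    have hAe : A = ∅ := Finset.card_eq_zero.mp (Nat.le_zero.mp hA)
    subst hAe
    exact ⟨∅, Finset.Subset.refl _, by simp [IsIndep], by simp, by intro X hX; simp⟩
  | succ n ih =>
    intro A hcardA
    rcases A.eq_empty_or_nonempty with rfl | hA
    · exact ⟨∅, Finset.Subset.refl _, by simp [IsIndep], by simp, by intro X hX; simp⟩
    obtain ⟨w, hwA, hwmin⟩ := A.exists_min_image (fun b => (A.filter (G.Adj b)).card) hA
    set F := A.filter (G.Adj w) with hF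
    have hwF : w ∉ F := by
      intro h
      exact G.irrefl (Finset.mem_filter.mp h).2
    set K := insert w F with hK
    have hKA : K ⊆ A := Finset.insert_subset_iff.mpr ⟨hwA, Finset.filter_subset _ _⟩
    set A' := A \ K with hA'
    have hA'subA : A' ⊆ A := Finset.sdiff_subset
    have hwA' : w ∉ A' := by
      rw [hA', Finset.mem_sdiff]
      intro h
      exact h.2 (by rw [hK]; exact Finset.mem_insert_self _ _)
    have hcardlt : A'.card < A.card := Finset.card_lt_card ⟨hA'subA, fun hc => hwA' (hc hwA)⟩
    have hcardA' : A'.card ≤ n := by omega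
    obtain ⟨J', hJ'A', hJ'ind, hJ'dom, hJ'bound⟩ := ih A' hcardA'
    have hwJ' : w ∉ J' := fun h => hwA' (hJ'A' h)
    have hcoesub : (↑J' : Set V) ⊆ (↑(insert w J') : Set V) := by
      rw [Finset.coe_insert]; exact Set.subset_insert _ _
    have hcross : ∀ b ∈ (↑J' : Set V), ¬ G.Adj w b := by
      intro b hb hadj
      have hbJ' : b ∈ J' := hb
      have hbA' : b ∈ A' := hJ'A' hbJ'
      have hbF : b ∈ F := by rw [hF, Finset.mem_filter]; exact ⟨hA'subA hbA', hadj⟩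
      rw [hA', Finset.mem_sdiff] at hbA'
      exact hbA'.2 (by rw [hK]; exact Finset.mem_insert_of_mem hbF)
    have hdomA : ∀ a ∈ A, a ∈ closedNbhd G (↑(insert w J') : Set V) := by
      intro a ha
      by_cases haw : a = w
      · exact Or.inl (by simp [haw])
      · by_cases hadj : G.Adj w a
        · exact Or.inr ⟨w, by simp, hadj⟩
        · have haA' : a ∈ A' := by
            rw [hA', Finset.mem_sdiff, hK]
            refine ⟨ha, ?_⟩
            simp only [Finset.mem_insert, hF, Finset.mem_filter]
            push_neg
            exact ⟨haw, fun _ => hadj⟩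
          exact closedNbhd_mono' G hcoesub (hJ'dom a haA')
    refine ⟨insert w J', Finset.insert_subset_iff.mpr ⟨hwA, hJ'A'.trans hA'subA⟩, ?_, hdomA, ?_⟩
    · rw [IsIndep, Finset.coe_insert]
      intro a ha b hb hne
      rcases Set.mem_insert_iff.mp ha with rfl | ha' <;>
        rcases Set.mem_insert_iff.mp hb with rfl | hb'
      · exact absurd rfl hne
      · exact hcross b hb'
      · exact fun hadj => hcross a ha' hadj.symm
      · exact hJ'ind ha' hb' hne
    · intro X hX
      have hXJ' : ∀ x ∈ X, x ∉ closedNbhd G (↑J' : Set V) :=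
        fun x hx h => hX x hx (closedNbhd_mono' G hcoesub h)
      have IH := hJ'bound X hXJ'
      have hsplit : A \ insert w J' = (A' \ J') ∪ F := by
        ext a
        constructor
        · intro h
          rw [Finset.mem_sdiff, Finset.mem_insert] at h
          push_neg at h
          have haA := h.1
          have hane := h.2.1
          have haJ' := h.2.2
          by_cases hadj : G.Adj w a
          · exact Finset.mem_union_right _ (by rw [hF, Finset.mem_filter]; exact ⟨haA, hadj⟩)
          · refine Finset.mem_union_left _ ?_
            rw [Finset.mem_sdiff]
            refine ⟨?_, haJ'⟩
            rw [hA', Finset.mem_sdiff, hK]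
            refine ⟨haA, ?_⟩
            simp only [Finset.mem_insert, hF, Finset.mem_filter]
            push_neg
            exact ⟨hane, fun _ => hadj⟩
        · intro h
          rw [Finset.mem_sdiff, Finset.mem_insert]
          push_neg
          rcases Finset.mem_union.mp h with h1 | h1
          · rw [Finset.mem_sdiff] at h1
            have haA' := h1.1
            have haA : a ∈ A := hA'subA haA'
            exact ⟨haA, fun he => hwA' (he ▸ haA'), h1.2⟩
          · have haA : a ∈ A := (Finset.filter_subset _ _) (hF ▸ h1)
            have hadj : G.Adj w a := (Finset.mem_filter.mp (hF ▸ h1)).2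
            refine ⟨haA, fun he => G.irrefl (he ▸ hadj), fun hJ => ?_⟩
            have h2 : a ∈ A' := hJ'A' hJ
            rw [hA', Finset.mem_sdiff] at h2
            exact h2.2 (by rw [hK]; exact Finset.mem_insert_of_mem h1)
      have hdisjFA : Disjoint (A' \ J') F := by
        rw [Finset.disjoint_left]
        intro a ha haF
        have h2 := (Finset.mem_sdiff.mp ha).1
        rw [hA', Finset.mem_sdiff] at h2
        exact h2.2 (by rw [hK]; exact Finset.mem_insert_of_mem haF)
      have hterm : ∀ d ∈ F, ((X.filter (G.Adj d)).card : ℝ) ≤ (G.maxDegree : ℝ) - F.card := by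
        intro d hdF
        have hdA : d ∈ A := (Finset.filter_subset _ _) (hF ▸ hdF)
        have hmle : F.card ≤ (A.filter (G.Adj d)).card := by
          rw [hF]; exact hwmin d hdA
        have hdisj2 : Disjoint (X.filter (G.Adj d)) (A.filter (G.Adj d)) := by
          rw [Finset.disjoint_left]
          intro y hy1 hy2
          exact hX y (Finset.mem_filter.mp hy1).1 (hdomA y (Finset.mem_filter.mp hy2).1)
        have hsubN : X.filter (G.Adj d) ∪ A.filter (G.Adj d) ⊆ G.neighborFinset d := by
          intro y hy
          rw [SimpleGraph.mem_neighborFinset]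
          rcases Finset.mem_union.mp hy with h2 | h2 <;> exact (Finset.mem_filter.mp h2).2
        have hnat : (X.filter (G.Adj d)).card + (A.filter (G.Adj d)).card ≤ G.maxDegree := by
          rw [← Finset.card_union_of_disjoint hdisj2]
          calc (X.filter (G.Adj d) ∪ A.filter (G.Adj d)).card
              ≤ (G.neighborFinset d).card := Finset.card_le_card hsubN
            _ = G.degree d := G.card_neighborFinset_eq_degree d
            _ ≤ G.maxDegree := G.degree_le_maxDegree d
        have hnat2 : (X.filter (G.Adj d)).card + F.card ≤ G.maxDegree := by omega
        have hc : ((X.filter (G.Adj d)).card : ℝ) + (F.card : ℝ) ≤ (G.maxDegree : ℝ) := by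
          exact_mod_cast hnat2
        linarith
      have hS2 : ∑ d ∈ F, ((X.filter (G.Adj d)).card : ℝ) ≤
          (F.card : ℝ) * ((G.maxDegree : ℝ) - F.card) := by
        calc ∑ d ∈ F, ((X.filter (G.Adj d)).card : ℝ)
            ≤ F.card • ((G.maxDegree : ℝ) - F.card) := Finset.sum_le_card_nsmul _ _ _ hterm
          _ = (F.card : ℝ) * ((G.maxDegree : ℝ) - F.card) := by rw [nsmul_eq_mul]
      have halg : (1 : ℝ) + (F.card : ℝ) * ((G.maxDegree : ℝ) - F.card) ≤
          ((G.maxDegree : ℝ) - 2 * Real.sqrt (G.maxDegree : ℝ) + 2) * ((F.card : ℝ) + 1) := by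
        nlinarith [sq_nonneg ((F.card : ℝ) + 1 - Real.sqrt (G.maxDegree : ℝ)),
          Real.sq_sqrt (show (0:ℝ) ≤ (G.maxDegree : ℝ) by positivity),
          Real.sqrt_nonneg ((G.maxDegree : ℝ))]
      have hcards : (A'.card : ℝ) + ((F.card : ℝ) + 1) = (A.card : ℝ) := by
        have h1 : A'.card + K.card = A.card := by
          rw [hA']; exact Finset.card_sdiff_add_card_eq_card hKA
        have h2 : K.card = F.card + 1 := by
          rw [hK]; rw [Finset.card_insert_of_notMem hwF]
        rw [h2] at h1
        exact_mod_cast h1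
      have hCsum : ((G.maxDegree : ℝ) - 2 * Real.sqrt (G.maxDegree : ℝ) + 2) * (A.card : ℝ)
          = ((G.maxDegree : ℝ) - 2 * Real.sqrt (G.maxDegree : ℝ) + 2) * (A'.card : ℝ)
            + ((G.maxDegree : ℝ) - 2 * Real.sqrt (G.maxDegree : ℝ) + 2) * ((F.card : ℝ) + 1) := by
        rw [← hcards]; ring
      have hcardJ : (((insert w J').card : ℕ) : ℝ) ≤ (J'.card : ℝ) + 1 := by
        have := Finset.card_insert_le w J'
        exact_mod_cast this
      rw [hsplit, Finset.sum_union hdisjFA]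
      linarith [IH, hS2, halg, hcardJ]

end AuxLemmas

/-- i(G) ≤ (Δ − 2√Δ + 2)·γ(G). -/
theorem stmt_7 [Fintype V] (G : SimpleGraph V) [DecidableRel G.Adj]
    (hΔ : 1 ≤ G.maxDegree) :
    (iNum G : ℝ) ≤ ((G.maxDegree : ℝ) - 2 * Real.sqrt (G.maxDegree) + 2) * (gammaNum G : ℝ) := by
  classical
  have hne : {n | ∃ S : Finset V, S.card = n ∧ IsDominating G ↑S}.Nonempty :=
    ⟨(Finset.univ : Finset V).card, Finset.univ, rfl, fun v => Or.inl (by simp)⟩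
  obtain ⟨D, hDcard, hDdom⟩ : ∃ S : Finset V, S.card = gammaNum G ∧ IsDominating G ↑S := by
    obtain ⟨S, h1, h2⟩ := Nat.sInf_mem hne
    exact ⟨S, h1, h2⟩
  obtain ⟨J, hJD, hJind, hJdom, hJb⟩ := exists_good G D
  set X := Finset.univ.filter (fun v => v ∉ closedNbhd G (↑J : Set V)) with hXdef
  have hXprop : ∀ x ∈ X, x ∉ closedNbhd G (↑J : Set V) := by
    intro x hx
    rw [hXdef, Finset.mem_filter] at hx
    exact hx.2
  have hbound := hJb X hXprop
  obtain ⟨M, hMX, hMind, hMdom⟩ := exists_mis G X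
  have hMJ : ∀ m ∈ (↑M : Set V), ∀ j ∈ (↑J : Set V), ¬ G.Adj j m := by
    intro m hm j hj hadj
    have hmM : m ∈ M := hm
    exact hXprop m (hMX hmM) (Or.inr ⟨j, hj, hadj⟩)
  set I := J ∪ M with hI
  have hIdom : IsDominating G (↑I : Set V) := by
    intro v
    by_cases hv : v ∈ closedNbhd G (↑J : Set V)
    · exact closedNbhd_mono' G
        (by rw [hI, Finset.coe_union]; exact Set.subset_union_left) hv
    · have hvX : v ∈ X := by
        rw [hXdef, Finset.mem_filter]
        exact ⟨Finset.mem_univ _, hv⟩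
      exact closedNbhd_mono' G
        (by rw [hI, Finset.coe_union]; exact Set.subset_union_right) (hMdom v hvX)
  have hIind : IsIndep G (↑I : Set V) := by
    rw [hI, IsIndep, Finset.coe_union]
    intro a ha b hb hne
    rcases ha with ha | ha <;> rcases hb with hb | hb
    · exact hJind ha hb hne
    · exact fun hadj => hMJ b hb a ha hadj
    · exact fun hadj => hMJ a ha b hb hadj.symm
    · exact hMind ha hb hne
  have hInum : iNum G ≤ I.card := Nat.sInf_le ⟨I, rfl, hIdom, hIind⟩
  have hXsum : (X.card : ℝ) ≤ ∑ d ∈ D \ J, ((X.filter (G.Adj d)).card : ℝ) := by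
    have hsub : X ⊆ (D \ J).biUnion (fun d => X.filter (G.Adj d)) := by
      intro x hx
      rcases hDdom x with hxD | ⟨u, huD, hadj⟩
      · exact absurd (hJdom x hxD) (hXprop x hx)
      · have huDf : u ∈ D := huD
        have huJ : u ∉ J := fun h => hXprop x hx (Or.inr ⟨u, h, hadj⟩)
        exact Finset.mem_biUnion.mpr
          ⟨u, Finset.mem_sdiff.mpr ⟨huDf, huJ⟩, Finset.mem_filter.mpr ⟨hx, hadj⟩⟩
    have hn : X.card ≤ ∑ d ∈ D \ J, (X.filter (G.Adj d)).card :=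
      (Finset.card_le_card hsub).trans Finset.card_biUnion_le
    exact_mod_cast hn
  have hIcard : (I.card : ℝ) ≤ (J.card : ℝ) + (X.card : ℝ) := by
    have h1 : I.card ≤ J.card + M.card := Finset.card_union_le _ _
    have h2 : M.card ≤ X.card := Finset.card_le_card hMX
    have h3 : I.card ≤ J.card + X.card := by omega
    exact_mod_cast h3
  have h0 : (iNum G : ℝ) ≤ (I.card : ℝ) := by exact_mod_cast hInum
  have hfin : (iNum G : ℝ) ≤
      ((G.maxDegree : ℝ) - 2 * Real.sqrt (G.maxDegree : ℝ) + 2) * (D.card : ℝ) := by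
    linarith [hbound, hXsum, hIcard, h0]
  rw [hDcard] at hfin
  exact hfin
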